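/- arXiv:1509.08220 — 4 statements merged into one kernel-verified Lean document; each statement's English description precedes it below -/
import Mathlib

section
/- Let a, b be positive reals with a ≠ b, U₀ = diag(a,b), U₁ = diag(b,a). Then there exists a rotation Q ∈ SO(2) and vectors v ∈ ℝ², n ∈ ℝ² with |n| = 1 such that U₀ - Q·U₁ = v ⊗ n, with n = (1/√2)(1,1) and v = √2·((a²-b²)/(a²+b²))·(a,-b). -/
open Matrix

def SO2 : Set (Matrix (Fin 2) (Fin 2) ℝ) :=
  {Q | Q * Qᵀ = 1 ∧ Q.det = 1}

/-!
Write `N = a² + b²`. The rotation `Q` with cosine `c = 2ab / N` and sine `s = (a² - b²) / N`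
(the Pythagorean-triple parametrisation of the unit circle) is chosen so that
`diag(a, b) - Q diag(b, a)` has both columns equal to `s • (a, -b)`; it is therefore
`s • (a, -b) ⊗ (1, 1)`, and normalising `(1, 1)` moves the factor `√2` onto the amplitude.
-/

def rotationMatrix (c s : ℝ) : Matrix (Fin 2) (Fin 2) ℝ := !![c, -s; s, c]

theorem rotationMatrix_mem_SO2 {c s : ℝ} (h : c ^ 2 + s ^ 2 = 1) : rotationMatrix c s ∈ SO2 := by
  constructor
  · ext i j
    fin_cases i <;> fin_cases j <;>
      simp [rotationMatrix, mul_apply, Fin.sum_univ_two] <;> linarith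
  · simp only [rotationMatrix, det_fin_two_of]
    linear_combination h

theorem diag_sub_rotationMatrix_mul_diag_swap {a b c s : ℝ} (h₀ : a * (1 - s) = c * b)
    (h₁ : b * (1 + s) = c * a) :
    !![a, 0; 0, b] - rotationMatrix c s * !![b, 0; 0, a] = vecMulVec (s • ![a, -b]) ![1, 1] := by
  ext i j
  fin_cases i <;> fin_cases j <;>
    simp [rotationMatrix, vecMulVec_apply] <;> linarith

theorem vecMulVec_smul_inv_smul {m n : Type*} {r : ℝ} (hr : r ≠ 0) (w : m → ℝ) (v : n → ℝ) :
    vecMulVec (r • w) (r⁻¹ • v) = vecMulVec w v := by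
  rw [smul_vecMulVec, vecMulVec_smul, smul_smul, mul_inv_cancel₀ hr, one_smul]

theorem pythagorean_param_sq_add_sq {a b : ℝ} (h : a ^ 2 + b ^ 2 ≠ 0) :
    (2 * a * b / (a ^ 2 + b ^ 2)) ^ 2 + ((a ^ 2 - b ^ 2) / (a ^ 2 + b ^ 2)) ^ 2 = 1 := by
  field_simp
  ring

theorem rank_one_connection_plus_general (a b : ℝ) (ha : 0 < a) :
    ∃ Q ∈ SO2, ∃ v nvec : Fin 2 → ℝ,
      v = (Real.sqrt 2 * ((a ^ 2 - b ^ 2) / (a ^ 2 + b ^ 2))) • ![a, -b] ∧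
      nvec = (1 / Real.sqrt 2) • ![1, 1] ∧
      (nvec 0) ^ 2 + (nvec 1) ^ 2 = 1 ∧
      (!![a, 0; 0, b] : Matrix (Fin 2) (Fin 2) ℝ) - Q * !![b, 0; 0, a] =
        Matrix.vecMulVec v nvec := by
  have hN : a ^ 2 + b ^ 2 ≠ 0 := by positivity
  set c := 2 * a * b / (a ^ 2 + b ^ 2)
  set s := (a ^ 2 - b ^ 2) / (a ^ 2 + b ^ 2)
  have h₀ : a * (1 - s) = c * b := by simp only [c, s]; field_simp; ring
  have h₁ : b * (1 + s) = c * a := by simp only [c, s]; field_simp; ring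
  refine ⟨rotationMatrix c s, rotationMatrix_mem_SO2 (pythagorean_param_sq_add_sq hN),
    _, _, rfl, rfl, ?_, ?_⟩
  · norm_num
  · rw [mul_smul, one_div, vecMulVec_smul_inv_smul (by positivity),
      diag_sub_rotationMatrix_mul_diag_swap h₀ h₁]

theorem rank_one_connection_plus (a b : ℝ) (ha : 0 < a) (hb : 0 < b) (hab : a ≠ b) :
    ∃ Q ∈ SO2, ∃ v nvec : Fin 2 → ℝ,
      v = (Real.sqrt 2 * ((a ^ 2 - b ^ 2) / (a ^ 2 + b ^ 2))) • ![a, -b] ∧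
      nvec = (1 / Real.sqrt 2) • ![1, 1] ∧
      (nvec 0) ^ 2 + (nvec 1) ^ 2 = 1 ∧
      (!![a, 0; 0, b] : Matrix (Fin 2) (Fin 2) ℝ) - Q * !![b, 0; 0, a] =
        Matrix.vecMulVec v nvec :=
  rank_one_connection_plus_general a b ha
end

section
/- Let a, b be positive reals with a ≠ b, U₀ = diag(a,b), U₁ = diag(b,a). Then there exists a rotation Q̃ ∈ SO(2) such that U₀ - Q̃·U₁ = √2·((a²-b²)/(a²+b²))·(a,b) ⊗ ((1/√2)(1,-1)), i.e. there is a second rank-one connection between the wells with normal direction (1,-1)/√2. -/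
open Matrix

theorem rank_one_connection_minus (a b : ℝ) (ha : 0 < a) (hb : 0 < b) (hab : a ≠ b) :
    ∃ Q ∈ SO2,
      (!![a, 0; 0, b] : Matrix (Fin 2) (Fin 2) ℝ) - Q * !![b, 0; 0, a] =
        Matrix.vecMulVec ((Real.sqrt 2 * ((a ^ 2 - b ^ 2) / (a ^ 2 + b ^ 2))) • ![a, b])
          ((1 / Real.sqrt 2) • ![1, -1]) := by
  have hd : a ^ 2 + b ^ 2 ≠ 0 := by positivity
  have hs2 : Real.sqrt 2 ≠ 0 := by positivity
  have hsq : Real.sqrt 2 * Real.sqrt 2 = 2 := Real.mul_self_sqrt (by norm_num)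
  refine ⟨!![2*a*b/(a^2+b^2), (a^2-b^2)/(a^2+b^2);
             (b^2-a^2)/(a^2+b^2), 2*a*b/(a^2+b^2)], ⟨?_, ?_⟩, ?_⟩
  · ext i j
    fin_cases i <;> fin_cases j <;>
      simp [Matrix.mul_apply, Fin.sum_univ_two, Matrix.transpose_apply, Matrix.vecHead, Matrix.vecTail] <;>
      field_simp <;> ring
  · rw [Matrix.det_fin_two_of]
    field_simp
    ring
  · ext i j
    fin_cases i <;> fin_cases j <;>
      simp [Matrix.mul_apply, Fin.sum_univ_two, Matrix.vecMulVec_apply] <;>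
      field_simp <;> ring
end

section
/- Let a, b > 0 with a ≠ b and set K = SO(2)·diag(a,b) ∪ SO(2)·diag(b,a). There exists a constant c > 0 (depending only on a,b) such that for every matrix F ∈ ℝ^{2×2} with det F > 0, min{(||F e₁| - a| + ||F e₂| - b|)², (||F e₁| - b| + ||F e₂| - a|)²} + |⟨F e₁, F e₂⟩| ≥ c · dist(F, K)², where F e₁, F e₂ are the columns of F, ⟨·,·⟩ is the Euclidean inner product, and dist(F,K) = inf_{M∈K} |F - M| in the Frobenius norm. -/
open Matrix

noncomputable def frob (M : Matrix (Fin 2) (Fin 2) ℝ) : ℝ :=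
  Real.sqrt (∑ i, ∑ j, (M i j) ^ 2)

noncomputable def distTo (F : Matrix (Fin 2) (Fin 2) ℝ)
    (S : Set (Matrix (Fin 2) (Fin 2) ℝ)) : ℝ :=
  sInf ((fun M => frob (F - M)) '' S)

/-- The two energy wells `SO(2)U₀ ∪ SO(2)U₁`. -/
def wells (a b : ℝ) : Set (Matrix (Fin 2) (Fin 2) ℝ) :=
  ((fun Q => Q * !![a, 0; 0, b]) '' SO2) ∪ ((fun Q => Q * !![b, 0; 0, a]) '' SO2)

/-!
Write `F = Q R` with `Q ∈ SO(2)` and `R = !![r, τ; 0, σ]`, where `r = |F e₁|`, `σ = det F / r > 0`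
and `r τ = ⟨F e₁, F e₂⟩`, so that `τ² + σ² = |F e₂|²`. Testing the distance against `Q U₀` and
`Q U₁` gives `dist(F, K)² ≤ (r - a)² + τ² + (σ - b)²` (and the same with `a`, `b` swapped), and
`|σ - |F e₂|| ≤ |τ|`. So it suffices to bound `τ²` by the left-hand side. If the column lengths
are within `s` of a well, then either `s ≳ min a b`, and `τ² ≤ |F e₂|² ≲ s²`, or
`r ≥ min a b / 2`, and `τ² ≤ |F e₂| |τ| ≲ r |τ| = |⟨F e₁, F e₂⟩|`.
-/

lemma sq_sub_le_of_sq_add_sq_eq {σ τ ρ : ℝ} (q : ℝ) (hσ : 0 ≤ σ) (hρ : 0 ≤ ρ)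
    (h : τ ^ 2 + σ ^ 2 = ρ ^ 2) : (σ - q) ^ 2 ≤ 2 * (ρ - q) ^ 2 + 2 * τ ^ 2 := by
  have hσρ : σ ≤ ρ := by nlinarith
  have hgap : (ρ - σ) ^ 2 ≤ τ ^ 2 := by nlinarith
  nlinarith [sq_nonneg (ρ - q + (ρ - σ))]

lemma sq_add_two_mul_sq_le (x y : ℝ) : x ^ 2 + 2 * y ^ 2 ≤ 2 * (|x| + |y|) ^ 2 := by
  nlinarith [sq_abs x, sq_abs y, mul_nonneg (abs_nonneg x) (abs_nonneg y)]

lemma sq_le_of_near_wells {m M r ρ τ s : ℝ} (hm : 0 < m) (hmM : m ≤ M) (hs : 0 ≤ s)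
    (hr₀ : 0 ≤ r) (hr : m - s ≤ r) (hρ : ρ ≤ M + s) (hτ : |τ| ≤ ρ) :
    τ ^ 2 ≤ (2 * M / m + 1) ^ 2 * (s ^ 2 + r * |τ|) := by
  set K := 2 * M / m + 1
  have hKm : K * (m / 2) = M + m / 2 := by simp only [K]; field_simp
  have hK1 : 1 ≤ K := le_add_of_nonneg_left (by have := hm.le.trans hmM; positivity)
  have hrτ : 0 ≤ r * |τ| := by positivity
  rw [← sq_abs τ]
  rcases le_or_gt (m / 2) s with hs' | hs'
  · have hτs : |τ| ≤ K * s := by nlinarith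
    have : |τ| ^ 2 ≤ (K * s) ^ 2 := pow_le_pow_left₀ (abs_nonneg τ) hτs 2
    nlinarith
  · have hτr : |τ| ≤ K * r := by nlinarith
    have : |τ| ^ 2 ≤ K * r * |τ| := by nlinarith [abs_nonneg τ]
    nlinarith

lemma well_defect_le {m M p q r ρ σ τ : ℝ} (hm : 0 < m) (hmM : m ≤ M) (hp : m ≤ p) (hq : q ≤ M)
    (hr : 0 ≤ r) (hσ : 0 ≤ σ) (hρ : 0 ≤ ρ) (h : τ ^ 2 + σ ^ 2 = ρ ^ 2) :
    (r - p) ^ 2 + τ ^ 2 + (σ - q) ^ 2 ≤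
      (2 + 3 * (2 * M / m + 1) ^ 2) * ((|r - p| + |ρ - q|) ^ 2 + r * |τ|) := by
  have hτρ : |τ| ≤ ρ := abs_le_of_sq_le_sq (by nlinarith) hρ
  have hτ := sq_le_of_near_wells (s := |r - p| + |ρ - q|) hm hmM (by positivity) hr
    (by linarith [neg_abs_le (r - p), abs_nonneg (ρ - q)])
    (by linarith [le_abs_self (ρ - q), abs_nonneg (r - p)]) hτρ
  have hσq := sq_sub_le_of_sq_add_sq_eq q hσ hρ h
  have hsq := sq_add_two_mul_sq_le (r - p) (ρ - q)
  have : 0 ≤ r * |τ| := by positivity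
  nlinarith

noncomputable def twoWellConstant (a b : ℝ) : ℝ := 2 + 3 * (2 * max a b / min a b + 1) ^ 2

lemma twoWellConstant_pos (a b : ℝ) : 0 < twoWellConstant a b := by
  unfold twoWellConstant; positivity

lemma le_twoWellConstant_mul {a b r ρ σ τ D : ℝ} (ha : 0 < a) (hb : 0 < b) (hr : 0 ≤ r)
    (hσ : 0 ≤ σ) (hρ : 0 ≤ ρ) (h : τ ^ 2 + σ ^ 2 = ρ ^ 2)
    (hD₀ : D ≤ (r - a) ^ 2 + τ ^ 2 + (σ - b) ^ 2) (hD₁ : D ≤ (r - b) ^ 2 + τ ^ 2 + (σ - a) ^ 2) :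
    D ≤ twoWellConstant a b *
      (min ((|r - a| + |ρ - b|) ^ 2) ((|r - b| + |ρ - a|) ^ 2) + r * |τ|) := by
  have hm : 0 < min a b := lt_min ha hb
  rcases min_choice ((|r - a| + |ρ - b|) ^ 2) ((|r - b| + |ρ - a|) ^ 2) with hmin | hmin <;>
    rw [hmin]
  · exact hD₀.trans (well_defect_le hm min_le_max (min_le_left a b) (le_max_right a b) hr hσ hρ h)
  · exact hD₁.trans (well_defect_le hm min_le_max (min_le_right a b) (le_max_left a b) hr hσ hρ h)

lemma transpose_mul_self_of_mem_SO2 {Q : Matrix (Fin 2) (Fin 2) ℝ} (hQ : Q ∈ SO2) :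
    Qᵀ * Q = 1 :=
  mul_eq_one_comm.mp hQ.1

lemma gram_mul_of_mem_SO2 {Q : Matrix (Fin 2) (Fin 2) ℝ} (hQ : Q ∈ SO2)
    (A : Matrix (Fin 2) (Fin 2) ℝ) : (Q * A)ᵀ * (Q * A) = Aᵀ * A := by
  rw [transpose_mul, Matrix.mul_assoc, ← Matrix.mul_assoc Qᵀ, transpose_mul_self_of_mem_SO2 hQ,
    Matrix.one_mul]

lemma frob_eq_sqrt_trace (M : Matrix (Fin 2) (Fin 2) ℝ) : frob M = √(trace (Mᵀ * M)) := by
  rw [frob, trace, Fin.sum_univ_two, Fin.sum_univ_two]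
  simp only [Fin.isValue, Fin.sum_univ_two, diag_apply, mul_apply, transpose_apply]
  congr 1
  ring

lemma frob_mul_of_mem_SO2 {Q : Matrix (Fin 2) (Fin 2) ℝ} (hQ : Q ∈ SO2)
    (A : Matrix (Fin 2) (Fin 2) ℝ) : frob (Q * A) = frob A := by
  rw [frob_eq_sqrt_trace, frob_eq_sqrt_trace, gram_mul_of_mem_SO2 hQ]

lemma rotation_mem_SO2 {c s : ℝ} (h : c ^ 2 + s ^ 2 = 1) : !![c, -s; s, c] ∈ SO2 := by
  refine ⟨?_, by rw [det_fin_two_of]; linear_combination h⟩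
  ext i j
  fin_cases i <;> fin_cases j <;>
    simp only [Fin.zero_eta, Fin.mk_one, Fin.isValue, mul_apply, of_apply, cons_val', cons_val_fin_one,
      cons_val_zero, cons_val_one, transpose_apply, Fin.sum_univ_two, one_apply_eq, one_apply_ne,
      ne_eq, zero_ne_one, one_ne_zero, not_false_eq_true] <;>
    first | linear_combination h | ring

lemma exists_SO2_mul_upperTriangular {F : Matrix (Fin 2) (Fin 2) ℝ} (hF : 0 < F.det) :
    ∃ Q ∈ SO2, ∃ r τ σ : ℝ, 0 < r ∧ 0 < σ ∧ F = Q * !![r, τ; 0, σ] := by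
  rw [det_fin_two] at hF
  set r := √(F 0 0 ^ 2 + F 1 0 ^ 2)
  have hr : 0 < r := Real.sqrt_pos.2 <| by
    by_contra! h
    have h₀ : F 0 0 = 0 := by nlinarith
    have h₁ : F 1 0 = 0 := by nlinarith
    simp [h₀, h₁] at hF
  have hr₂ : r ^ 2 = F 0 0 ^ 2 + F 1 0 ^ 2 := Real.sq_sqrt (by positivity)
  set c := F 0 0 / r
  set s := F 1 0 / r
  have hc : F 0 0 = c * r := (div_mul_cancel₀ _ hr.ne').symm
  have hs : F 1 0 = s * r := (div_mul_cancel₀ _ hr.ne').symm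
  have hcs : c ^ 2 + s ^ 2 = 1 := by
    have h : r ^ 2 * (c ^ 2 + s ^ 2) = r ^ 2 * 1 := by
      rw [hc, hs] at hr₂
      linear_combination -hr₂
    exact mul_left_cancel₀ (by positivity) h
  refine ⟨_, rotation_mem_SO2 hcs, r, c * F 0 1 + s * F 1 1, c * F 1 1 - s * F 0 1, hr, ?_, ?_⟩
  · rw [hc, hs] at hF
    nlinarith
  · ext i j
    fin_cases i <;> fin_cases j <;>
      simp only [Fin.zero_eta, Fin.mk_one, Fin.isValue, mul_apply, of_apply, cons_val',
        cons_val_fin_one, cons_val_zero, cons_val_one, Fin.sum_univ_two, mul_zero, add_zero, neg_mul]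
    exacts [hc, by linear_combination (-F 0 1) * hcs, hs, by linear_combination (-F 1 1) * hcs]

lemma transpose_mul_self_apply_fin_two (M : Matrix (Fin 2) (Fin 2) ℝ) (i j : Fin 2) :
    (Mᵀ * M) i j = M 0 i * M 0 j + M 1 i * M 1 j := by
  simp [mul_apply, Fin.sum_univ_two]

lemma columns_of_eq_SO2_mul {F Q : Matrix (Fin 2) (Fin 2) ℝ} {r τ σ : ℝ} (hQ : Q ∈ SO2)
    (hF : F = Q * !![r, τ; 0, σ]) :
    F 0 0 ^ 2 + F 1 0 ^ 2 = r ^ 2 ∧ F 0 0 * F 0 1 + F 1 0 * F 1 1 = r * τ ∧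
      F 0 1 ^ 2 + F 1 1 ^ 2 = τ ^ 2 + σ ^ 2 := by
  have h := gram_mul_of_mem_SO2 hQ !![r, τ; 0, σ]
  rw [← hF] at h
  have h₀₀ := congrFun₂ h 0 0
  have h₀₁ := congrFun₂ h 0 1
  have h₁₁ := congrFun₂ h 1 1
  simp only [transpose_mul_self_apply_fin_two, of_apply, cons_val', cons_val_zero,
    cons_val_fin_one, cons_val_one, mul_zero, add_zero, zero_mul] at h₀₀ h₀₁ h₁₁
  exact ⟨by linear_combination h₀₀, h₀₁, by linear_combination h₁₁⟩

lemma frob_sq_upperTriangular_sub_diagonal (r τ σ p q : ℝ) :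
    frob (!![r, τ; 0, σ] - !![p, 0; 0, q]) ^ 2 = (r - p) ^ 2 + τ ^ 2 + (σ - q) ^ 2 := by
  rw [frob, Real.sq_sqrt (by positivity)]
  simp [Fin.sum_univ_two]

lemma distTo_sq_le {F M : Matrix (Fin 2) (Fin 2) ℝ} {S : Set (Matrix (Fin 2) (Fin 2) ℝ)}
    (hM : M ∈ S) : distTo F S ^ 2 ≤ frob (F - M) ^ 2 := by
  have hnonneg : ∀ x ∈ (fun M => frob (F - M)) '' S, 0 ≤ x := by
    rintro _ ⟨N, -, rfl⟩
    exact Real.sqrt_nonneg _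
  exact pow_le_pow_left₀ (Real.sInf_nonneg hnonneg) (csInf_le ⟨0, hnonneg⟩ ⟨M, hM, rfl⟩) 2

theorem lower_bound_two_well_general (a b : ℝ) (ha : 0 < a) (hb : 0 < b) :
    ∃ c : ℝ, 0 < c ∧ ∀ F : Matrix (Fin 2) (Fin 2) ℝ, 0 < F.det →
      min ((|Real.sqrt ((F 0 0) ^ 2 + (F 1 0) ^ 2) - a| +
            |Real.sqrt ((F 0 1) ^ 2 + (F 1 1) ^ 2) - b|) ^ 2)
          ((|Real.sqrt ((F 0 0) ^ 2 + (F 1 0) ^ 2) - b| +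
            |Real.sqrt ((F 0 1) ^ 2 + (F 1 1) ^ 2) - a|) ^ 2) +
        |F 0 0 * F 0 1 + F 1 0 * F 1 1| ≥ c * (distTo F (wells a b)) ^ 2 := by
  refine ⟨(twoWellConstant a b)⁻¹, inv_pos.2 (twoWellConstant_pos a b), fun F hF => ?_⟩
  obtain ⟨Q, hQ, r, τ, σ, hr, hσ, hQR⟩ := exists_SO2_mul_upperTriangular hF
  obtain ⟨h₀, h₀₁, h₁⟩ := columns_of_eq_SO2_mul hQ hQR
  have hdist : ∀ p q, Q * !![p, 0; 0, q] ∈ wells a b →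
      distTo F (wells a b) ^ 2 ≤ (r - p) ^ 2 + τ ^ 2 + (σ - q) ^ 2 := fun p q hM => by
    rw [← frob_sq_upperTriangular_sub_diagonal, ← frob_mul_of_mem_SO2 hQ, Matrix.mul_sub, ← hQR]
    exact distTo_sq_le hM
  rw [h₀, h₀₁, h₁, Real.sqrt_sq hr.le, abs_mul, abs_of_pos hr, ge_iff_le,
    inv_mul_le_iff₀ (twoWellConstant_pos a b)]
  exact le_twoWellConstant_mul ha hb hr.le hσ.le (Real.sqrt_nonneg _)
    (Real.sq_sqrt (by positivity)).symm (hdist a b (Or.inl ⟨Q, hQ, rfl⟩))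
    (hdist b a (Or.inr ⟨Q, hQ, rfl⟩))

theorem lower_bound_two_well (a b : ℝ) (ha : 0 < a) (hb : 0 < b) (hab : a ≠ b) :
    ∃ c : ℝ, 0 < c ∧ ∀ F : Matrix (Fin 2) (Fin 2) ℝ, 0 < F.det →
      min ((|Real.sqrt ((F 0 0) ^ 2 + (F 1 0) ^ 2) - a| +
            |Real.sqrt ((F 0 1) ^ 2 + (F 1 1) ^ 2) - b|) ^ 2)
          ((|Real.sqrt ((F 0 0) ^ 2 + (F 1 0) ^ 2) - b| +
            |Real.sqrt ((F 0 1) ^ 2 + (F 1 1) ^ 2) - a|) ^ 2) +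
        |F 0 0 * F 0 1 + F 1 0 * F 1 1| ≥ c * (distTo F (wells a b)) ^ 2 :=
  lower_bound_two_well_general a b ha hb
end

section
/- Let ν₀ ∈ S¹, let x₀, y₀ ∈ ℝ² with |x₀ - y₀| = 1, α ∈ (0, 1/8), and let f ∈ L¹(M) be nonnegative, where M = conv(B_{2α}(x₀) ∪ B_{2α}(y₀)). Then ∫_{B_α(x₀) × B_α(y₀)} (∫_{[x,y]} f dH¹) dx dy ≤ C α³ ∫_M f dz, where [x,y] denotes the line segment from x to y and C is a universal constant. -/
open MeasureTheory

noncomputable section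

abbrev E2 := EuclideanSpace ℝ (Fin 2)

/-!
Split the parameter range of the segments at `t = 1 / 2`; the symmetry `(x, y, t) ↦ (y, x, 1 - t)`
turns the lower half into the upper half with the balls exchanged. For `t ≥ 1 / 2` and fixed `x`,
the substitution `z = (1 - t) x + t y` has Jacobian `t⁻ⁿ ≤ 2ⁿ`, and a point `z` only arises from
parameters `t` within `α` of `⟪b - a, z - a⟫`. After Tonelli each `z` is therefore counted over a
`t`-set of length `2α`, and integrating over `x ∈ B_α(a)` contributes `μ (B_α) ∼ αⁿ`: in the plane,
`α³` in total. A nonnegative `f` that is merely integrable on the convex hull is first replaced by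
a measurable majorant with the same integral over it.
-/

open Metric Set Module
open scoped ENNReal Real RealInnerProductSpace

theorem lintegral_comp_add_smul {E : Type*} [NormedAddCommGroup E] [NormedSpace ℝ E]
    [FiniteDimensional ℝ E] [MeasurableSpace E] [BorelSpace E] (μ : Measure E)
    [μ.IsAddHaarMeasure] {g : E → ℝ≥0∞} (hg : Measurable g) (c : E) {t : ℝ}
    (ht : t ≠ 0) :
    ∫⁻ y, g (c + t • y) ∂μ = ENNReal.ofReal |(t ^ finrank ℝ E)⁻¹| * ∫⁻ z, g z ∂μ := by
  have hmap : μ.map (fun y ↦ c + t • y) = ENNReal.ofReal |(t ^ finrank ℝ E)⁻¹| • μ := by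
    rw [show (fun y ↦ c + t • y) = (c + ·) ∘ (t • ·) from rfl,
      ← Measure.map_map (measurable_const_add c) (measurable_const_smul t),
      Measure.map_addHaar_smul μ ht, Measure.map_smul, map_add_left_eq_self]
  rw [← lintegral_map hg (by fun_prop), hmap, lintegral_smul_measure, smul_eq_mul]

theorem abs_sub_inner_lt_of_mem_ball {E : Type*} [NormedAddCommGroup E]
    [InnerProductSpace ℝ E] {a b x y : E} {α t : ℝ} (hab : ‖b - a‖ = 1)
    (hx : x ∈ ball a α) (hy : y ∈ ball b α) (ht : t ∈ Icc (0 : ℝ) 1) :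
    |t - ⟪b - a, (1 - t) • x + t • y - a⟫| < α := by
  set w := (1 - t) • (x - a) + t • (y - b)
  have hw : w ∈ ball (0 : E) α :=
    convex_ball (0 : E) α (by simpa [dist_eq_norm] using hx)
      (by simpa [dist_eq_norm] using hy) (by linarith [ht.2]) ht.1 (by ring)
  have hsplit : (1 - t) • x + t • y - a = w + t • (b - a) := by simp only [w]; module
  have hinner : ⟪b - a, b - a⟫ = 1 := by rw [real_inner_self_eq_norm_sq, hab, one_pow]
  rw [hsplit, inner_add_right, real_inner_smul_right, hinner, mul_one, sub_add_cancel_right,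
    abs_neg]
  calc |⟪b - a, w⟫| ≤ ‖b - a‖ * ‖w‖ := abs_real_inner_le_norm _ _
    _ < α := by rw [hab, one_mul]; simpa using hw

theorem setLIntegral_Icc_comp_sub_left (h : ℝ → ℝ≥0∞) (a b c : ℝ) :
    ∫⁻ t in Icc a b, h (c - t) = ∫⁻ t in Icc (c - b) (c - a), h t := by
  have h_subst := (Measure.measurePreserving_sub_left volume c).setLIntegral_comp_preimage_emb
    (Homeomorph.subLeft c).measurableEmbedding h (Icc (c - b) (c - a))
  rwa [preimage_const_sub_Icc, sub_sub_cancel, sub_sub_cancel] at h_subst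

theorem setLIntegral_prod_segment_Icc_zero_half_eq_swap {E : Type*} [AddCommGroup E] [Module ℝ E]
    [MeasurableSpace E] (μ : Measure E) [SFinite μ] (g : E → ℝ≥0∞) (A B : Set E) :
    ∫⁻ p in A ×ˢ B, (∫⁻ t in Icc (0 : ℝ) (1 / 2), g ((1 - t) • p.1 + t • p.2)) ∂μ.prod μ
      = ∫⁻ p in B ×ˢ A, (∫⁻ t in Icc (1 / 2 : ℝ) 1, g ((1 - t) • p.1 + t • p.2)) ∂μ.prod μ := by
  rw [← Measure.prod_restrict, ← Measure.prod_restrict, ← lintegral_prod_swap]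
  refine lintegral_congr fun p ↦ ?_
  calc ∫⁻ t in Icc (0 : ℝ) (1 / 2), g ((1 - t) • p.2 + t • p.1)
      = ∫⁻ t in Icc (0 : ℝ) (1 / 2), g ((1 - (1 - t)) • p.1 + (1 - t) • p.2) := by
        refine lintegral_congr fun t ↦ ?_
        congr 1
        module
    _ = ∫⁻ t in Icc (1 / 2 : ℝ) 1, g ((1 - t) • p.1 + t • p.2) := by
        rw [setLIntegral_Icc_comp_sub_left (fun t ↦ g ((1 - t) • p.1 + t • p.2))]
        norm_num

theorem AEMeasurable.exists_measurable_ge {X : Type*} [MeasurableSpace X] {μ : Measure X}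
    {f : X → ℝ≥0∞} (hf : AEMeasurable f μ) : ∃ g, Measurable g ∧ f ≤ g ∧ g =ᵐ[μ] f := by
  classical
  obtain ⟨T, hfT, hTm, hT0⟩ := exists_measurable_superset_of_null (ae_iff.1 hf.ae_eq_mk)
  refine ⟨T.piecewise (fun _ ↦ ∞) (hf.mk f), measurable_const.piecewise hTm hf.measurable_mk,
    fun x ↦ ?_, ?_⟩
  · by_cases hx : x ∈ T
    · simp [hx]
    · rw [piecewise_eq_of_notMem _ _ _ hx]
      exact (not_not.1 fun h ↦ hx (hfT h)).le
  · filter_upwards [measure_eq_zero_iff_ae_notMem.1 hT0, hf.ae_eq_mk] with x hxT hx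
    rw [piecewise_eq_of_notMem _ _ _ hxT, hx]

section Segment

variable {E : Type*} [NormedAddCommGroup E] [InnerProductSpace ℝ E] [FiniteDimensional ℝ E]
  [MeasurableSpace E] [BorelSpace E] (μ : Measure E) [μ.IsAddHaarMeasure]

theorem lintegral_Icc_lintegral_ball_segment_le {g : E → ℝ≥0∞} (hg : Measurable g) {a b x : E}
    {α : ℝ} (hab : ‖b - a‖ = 1) (hx : x ∈ ball a α) :
    ∫⁻ t in Icc (1 / 2 : ℝ) 1, ∫⁻ y in ball b α, g ((1 - t) • x + t • y) ∂μ
      ≤ 2 ^ finrank ℝ E * ENNReal.ofReal (2 * α) * ∫⁻ z, g z ∂μ := by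
  -- A segment point `z = (1 - t) x + t y` has `t` within `α` of `⟪b - a, z - a⟫`,
  -- so `g` may be replaced by `H`, whose `t`-sections have measure `2α`.
  set H : ℝ → E → ℝ≥0∞ := fun t z ↦ (ball ⟪b - a, z - a⟫ α).indicator (fun _ ↦ g z) t
  have hH : Measurable (Function.uncurry H) :=
    (hg.comp measurable_snd).indicator (measurableSet_lt (by fun_prop) (by fun_prop))
  have hgH : ∀ t ∈ Icc (1 / 2 : ℝ) 1, ∀ y ∈ ball b α,
      g ((1 - t) • x + t • y) = H t ((1 - t) • x + t • y) := by
    intro t ht y hy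
    have hslab := abs_sub_inner_lt_of_mem_ball hab hx hy ⟨by linarith [ht.1], ht.2⟩
    simp only [H]
    rw [indicator_of_mem]
    rwa [mem_ball, Real.dist_eq]
  have hJac : ∀ t ∈ Icc (1 / 2 : ℝ) 1, ENNReal.ofReal |(t ^ finrank ℝ E)⁻¹| ≤ 2 ^ finrank ℝ E := by
    intro t ht
    have ht0 : 0 < t := by linarith [ht.1]
    have ht2 : t⁻¹ ≤ 2 := by rw [inv_le_comm₀ ht0 two_pos]; linarith [ht.1]
    rw [abs_of_pos (by positivity), ← inv_pow, ← ENNReal.ofReal_ofNat,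
      ← ENNReal.ofReal_pow two_pos.le]
    gcongr
  calc ∫⁻ t in Icc (1 / 2 : ℝ) 1, ∫⁻ y in ball b α, g ((1 - t) • x + t • y) ∂μ
      ≤ ∫⁻ t in Icc (1 / 2 : ℝ) 1, ∫⁻ y, H t ((1 - t) • x + t • y) ∂μ := by
        refine setLIntegral_mono' measurableSet_Icc fun t ht ↦ ?_
        rw [setLIntegral_congr_fun measurableSet_ball (hgH t ht)]
        exact setLIntegral_le_lintegral _ _
    _ ≤ ∫⁻ t in Icc (1 / 2 : ℝ) 1, 2 ^ finrank ℝ E * ∫⁻ z, H t z ∂μ := by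
        refine setLIntegral_mono' measurableSet_Icc fun t ht ↦ ?_
        rw [lintegral_comp_add_smul μ hH.of_uncurry_left _ (by linarith [ht.1])]
        gcongr
        exact hJac t ht
    _ ≤ 2 ^ finrank ℝ E * ∫⁻ t, ∫⁻ z, H t z ∂μ := by
        rw [lintegral_const_mul' _ _ (by simp)]
        gcongr
        exact Measure.restrict_le_self
    _ = 2 ^ finrank ℝ E * ∫⁻ z, (∫⁻ t, H t z) ∂μ := by
        rw [lintegral_lintegral_swap hH.aemeasurable]
    _ = 2 ^ finrank ℝ E * ENNReal.ofReal (2 * α) * ∫⁻ z, g z ∂μ := by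
        simp only [H, lintegral_indicator_const measurableSet_ball, Real.volume_ball]
        rw [lintegral_mul_const _ hg, mul_assoc, mul_comm (ENNReal.ofReal _)]

theorem setLIntegral_prod_ball_segment_Icc_half_le {g : E → ℝ≥0∞} (hg : Measurable g)
    {a b : E} {α : ℝ} (hab : dist a b = 1) :
    ∫⁻ p in ball a α ×ˢ ball b α, (∫⁻ t in Icc (1 / 2 : ℝ) 1, g ((1 - t) • p.1 + t • p.2)) ∂μ.prod μ
      ≤ 2 ^ finrank ℝ E * ENNReal.ofReal (2 * α) * μ (ball a α) * ∫⁻ z, g z ∂μ := by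
  have hG : Measurable fun q : (E × E) × ℝ ↦ g ((1 - q.2) • q.1.1 + q.2 • q.1.2) :=
    hg.comp (by fun_prop)
  rw [setLIntegral_prod _ hG.lintegral_prod_right'.aemeasurable]
  calc ∫⁻ x in ball a α, ∫⁻ y in ball b α, (∫⁻ t in Icc (1 / 2 : ℝ) 1,
          g ((1 - t) • x + t • y)) ∂μ ∂μ
      ≤ ∫⁻ _ in ball a α, 2 ^ finrank ℝ E * ENNReal.ofReal (2 * α) * ∫⁻ z, g z ∂μ ∂μ := by
        refine setLIntegral_mono' measurableSet_ball fun x hx ↦ ?_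
        rw [lintegral_lintegral_swap (f := fun y t ↦ g ((1 - t) • x + t • y))
          (hg.comp (by fun_prop)).aemeasurable]
        exact lintegral_Icc_lintegral_ball_segment_le μ hg (by rwa [← dist_eq_norm']) hx
    _ = 2 ^ finrank ℝ E * ENNReal.ofReal (2 * α) * μ (ball a α) * ∫⁻ z, g z ∂μ := by
        rw [setLIntegral_const]
        ring

theorem setLIntegral_prod_ball_segment_le {g : E → ℝ≥0∞} (hg : Measurable g) {a b : E}
    {α : ℝ} (hab : dist a b = 1) :
    ∫⁻ p in ball a α ×ˢ ball b α, (∫⁻ t in Icc (0 : ℝ) 1, g ((1 - t) • p.1 + t • p.2)) ∂μ.prod μ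
      ≤ 2 ^ (finrank ℝ E + 2) * ENNReal.ofReal α * μ (ball 0 α) * ∫⁻ z, g z ∂μ := by
  have hG : Measurable fun q : (E × E) × ℝ ↦ g ((1 - q.2) • q.1.1 + q.2 • q.1.2) :=
    hg.comp (by fun_prop)
  calc ∫⁻ p in ball a α ×ˢ ball b α, (∫⁻ t in Icc (0 : ℝ) 1, g ((1 - t) • p.1 + t • p.2)) ∂μ.prod μ
      ≤ ∫⁻ p in ball a α ×ˢ ball b α, ((∫⁻ t in Icc (0 : ℝ) (1 / 2), g ((1 - t) • p.1 + t • p.2))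
          + ∫⁻ t in Icc (1 / 2 : ℝ) 1, g ((1 - t) • p.1 + t • p.2)) ∂μ.prod μ := by
        refine lintegral_mono fun p ↦ ?_
        rw [← Icc_union_Icc_eq_Icc (by norm_num) (by norm_num : (1 / 2 : ℝ) ≤ 1)]
        exact lintegral_union_le _ _ _
    _ = ∫⁻ p in ball b α ×ˢ ball a α, (∫⁻ t in Icc (1 / 2 : ℝ) 1, g ((1 - t) • p.1 + t • p.2))
          ∂μ.prod μ
        + ∫⁻ p in ball a α ×ˢ ball b α, (∫⁻ t in Icc (1 / 2 : ℝ) 1, g ((1 - t) • p.1 + t • p.2))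
          ∂μ.prod μ := by
        rw [lintegral_add_left hG.lintegral_prod_right',
          setLIntegral_prod_segment_Icc_zero_half_eq_swap]
    _ ≤ 2 ^ finrank ℝ E * ENNReal.ofReal (2 * α) * μ (ball b α) * ∫⁻ z, g z ∂μ
        + 2 ^ finrank ℝ E * ENNReal.ofReal (2 * α) * μ (ball a α) * ∫⁻ z, g z ∂μ := by
        gcongr
        · exact setLIntegral_prod_ball_segment_Icc_half_le μ hg (by rwa [dist_comm])
        · exact setLIntegral_prod_ball_segment_Icc_half_le μ hg hab
    _ = 2 ^ (finrank ℝ E + 2) * ENNReal.ofReal α * μ (ball 0 α) * ∫⁻ z, g z ∂μ := by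
        rw [Measure.addHaar_ball_center μ a, Measure.addHaar_ball_center μ b,
          ENNReal.ofReal_mul zero_le_two, ENNReal.ofReal_ofNat]
        ring

theorem lintegral_prod_ball_enorm_setIntegral_segment_le {f : E → ℝ} (hf : ∀ z, 0 ≤ f z)
    {a b : E} {α : ℝ} (hab : dist a b = 1) (hα : α ≤ 1 / 2)
    (hInt : IntegrableOn f (convexHull ℝ (ball a (2 * α) ∪ ball b (2 * α))) μ) :
    ∫⁻ p in ball a α ×ˢ ball b α,
        ‖∫ t in Icc (0 : ℝ) 1, f ((1 - t) • p.1 + t • p.2) * dist p.1 p.2‖ₑ ∂μ.prod μ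
      ≤ 2 ^ (finrank ℝ E + 3) * ENNReal.ofReal α * μ (ball 0 α)
          * ENNReal.ofReal (∫ z in convexHull ℝ (ball a (2 * α) ∪ ball b (2 * α)), f z ∂μ) := by
  set M := convexHull ℝ (ball a (2 * α) ∪ ball b (2 * α))
  have hM : IsOpen M := (isOpen_ball.union isOpen_ball).convexHull
  obtain ⟨G, hGm, hfG, hGf⟩ := hInt.aemeasurable.ennreal_ofReal.exists_measurable_ge
  set g : E → ℝ≥0∞ := fun z ↦ 2 * M.indicator G z
  have hg : Measurable g := (hGm.indicator hM.measurableSet).const_mul 2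
  have hseg : ∀ p ∈ ball a α ×ˢ ball b α, ∀ t ∈ Icc (0 : ℝ) 1, (1 - t) • p.1 + t • p.2 ∈ M := by
    intro p hp t ht
    have hα0 : 0 < α := pos_of_mem_ball hp.1
    exact convex_convexHull ℝ _
      (subset_convexHull ℝ _ (mem_union_left _ (ball_subset_ball (by linarith) hp.1)))
      (subset_convexHull ℝ _ (mem_union_right _ (ball_subset_ball (by linarith) hp.2)))
      (sub_nonneg.2 ht.2) ht.1 (sub_add_cancel 1 t)
  have hpt : ∀ p ∈ ball a α ×ˢ ball b α, ∀ t ∈ Icc (0 : ℝ) 1,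
      ‖f ((1 - t) • p.1 + t • p.2) * dist p.1 p.2‖ₑ ≤ g ((1 - t) • p.1 + t • p.2) := by
    intro p hp t ht
    have hlen : dist p.1 p.2 ≤ 2 := by
      linarith [dist_triangle4 p.1 a b p.2, mem_ball.1 hp.1, mem_ball'.1 hp.2]
    rw [enorm_mul, Real.enorm_of_nonneg (hf _), Real.enorm_of_nonneg dist_nonneg, mul_comm]
    simp only [g, indicator_of_mem (hseg p hp t ht)]
    gcongr
    · simpa using ENNReal.ofReal_le_ofReal hlen
    · exact hfG _
  have hg_int : ∫⁻ z, g z ∂μ = 2 * ENNReal.ofReal (∫ z in M, f z ∂μ) := by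
    rw [lintegral_const_mul _ (hGm.indicator hM.measurableSet),
      lintegral_indicator hM.measurableSet,
      lintegral_congr_ae hGf, ofReal_integral_eq_lintegral_ofReal hInt (.of_forall hf)]
  calc _ ≤ ∫⁻ p in ball a α ×ˢ ball b α,
          (∫⁻ t in Icc (0 : ℝ) 1, g ((1 - t) • p.1 + t • p.2)) ∂μ.prod μ :=
        setLIntegral_mono' (measurableSet_ball.prod measurableSet_ball) fun p hp ↦
          (enorm_integral_le_lintegral_enorm _).trans
            (setLIntegral_mono' measurableSet_Icc (hpt p hp))
    _ ≤ 2 ^ (finrank ℝ E + 2) * ENNReal.ofReal α * μ (ball 0 α) * ∫⁻ z, g z ∂μ :=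
        setLIntegral_prod_ball_segment_le μ hg hab
    _ = _ := by
        rw [hg_int, pow_succ]
        ring

end Segment

theorem averaging_estimate :
    ∃ C : ℝ, 0 < C ∧
      ∀ (x₀ y₀ : E2) (α : ℝ) (f : E2 → ℝ),
        dist x₀ y₀ = 1 → 0 < α → α < 1 / 8 → (∀ z, 0 ≤ f z) →
        IntegrableOn f (convexHull ℝ (Metric.ball x₀ (2 * α) ∪ Metric.ball y₀ (2 * α))) →
        (∫ p in (Metric.ball x₀ α ×ˢ Metric.ball y₀ α),
            (∫ t in Set.Icc (0 : ℝ) 1, f ((1 - t) • p.1 + t • p.2) * dist p.1 p.2)) ≤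
          C * α ^ 3 *
            ∫ z in convexHull ℝ (Metric.ball x₀ (2 * α) ∪ Metric.ball y₀ (2 * α)), f z := by
  refine ⟨32 * π, by positivity, fun x₀ y₀ α f hdist hα hα8 hf hInt ↦ ?_⟩
  have hbound :=
    lintegral_prod_ball_enorm_setIntegral_segment_le volume hf hdist (by linarith) hInt
  rw [← Measure.volume_eq_prod, EuclideanSpace.volume_ball_fin_two, finrank_euclideanSpace_fin]
    at hbound
  have hI : 0 ≤ ∫ z in convexHull ℝ (ball x₀ (2 * α) ∪ ball y₀ (2 * α)), f z := integral_nonneg hf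
  calc _ ≤ ‖∫ p in ball x₀ α ×ˢ ball y₀ α,
          ∫ t in Icc (0 : ℝ) 1, f ((1 - t) • p.1 + t • p.2) * dist p.1 p.2‖ := le_abs_self _
    _ ≤ _ := (norm_integral_le_lintegral_norm _).trans
        (ENNReal.toReal_le_of_le_ofReal (by positivity) ?_)
  simp only [ofReal_norm]
  refine hbound.trans_eq ?_
  rw [ENNReal.ofReal_mul (by positivity), ENNReal.ofReal_mul (by positivity),
    ENNReal.ofReal_mul (by positivity), ENNReal.ofReal_pow hα.le, ENNReal.ofReal_ofNat]
  ring

end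
end
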